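/- Let Q ⊂ ℝ^d be a convex polytope with vertices v₁,…,v_M and suppose there exists c > 0 such that for each vertex vᵢ and each ρ ∈ (0, diam Q], the uniform probability measure μ on ∂Q satisfies μ(B(vᵢ, ρ)) ≥ c·ρ^{d−1}. If X₁,…,X_n are i.i.d. with law μ and Q_n = conv(X₁,…,X_n), then for all r > 0 with r·n^{−1/(d−1)} ≤ diam Q, P(δ_H(Q, Q_n) ≥ r·n^{−1/(d−1)}) ≤ M·e^{−c·r^{d−1}}. -/

import Mathlib

open MeasureTheory ProbabilityTheory Metric

theorem convexOn_infDist_aux {E : Type*} [NormedAddCommGroup E] [NormedSpace ℝ E]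
    {t : Set E} (ht : Convex ℝ t) (hne : t.Nonempty) :
    ConvexOn ℝ Set.univ (fun x => Metric.infDist x t) := by
  refine ⟨convex_univ, fun x _ y _ a b ha hb hab => ?_⟩
  refine le_of_forall_pos_le_add fun ε hε => ?_
  obtain ⟨p, hp, hxp⟩ := (Metric.infDist_lt_iff hne).mp
    (show Metric.infDist x t < Metric.infDist x t + ε by linarith)
  obtain ⟨q, hq, hyq⟩ := (Metric.infDist_lt_iff hne).mp
    (show Metric.infDist y t < Metric.infDist y t + ε by linarith)
  have hmem : a • p + b • q ∈ t := ht hp hq ha hb hab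
  calc Metric.infDist (a • x + b • y) t ≤ dist (a • x + b • y) (a • p + b • q) :=
        Metric.infDist_le_dist_of_mem hmem
    _ ≤ a * dist x p + b * dist y q := by
        rw [dist_eq_norm, dist_eq_norm, dist_eq_norm]
        calc ‖a • x + b • y - (a • p + b • q)‖ = ‖a • (x - p) + b • (y - q)‖ := by
              congr 1; module
          _ ≤ ‖a • (x - p)‖ + ‖b • (y - q)‖ := norm_add_le _ _
          _ = a * ‖x - p‖ + b * ‖y - q‖ := by
              rw [norm_smul, norm_smul, Real.norm_of_nonneg ha, Real.norm_of_nonneg hb]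
    _ ≤ a * (Metric.infDist x t + ε) + b * (Metric.infDist y t + ε) := by gcongr
    _ = a * Metric.infDist x t + b * Metric.infDist y t + ε := by nlinarith [hab]

/-- Tail bound for the Hausdorff distance between a polytope and the convex
hull of `n` i.i.d. points sampled from the (uniform measure on the) boundary:
`P(δ_H(Q, Q_n) ≥ r n^{−1/(d−1)}) ≤ M e^{−c r^{d−1}}`. -/
theorem stmt_16 (d M n : ℕ) (hd : 2 ≤ d) (hM : 1 ≤ M) (hn : 0 < n)
    (v : Fin M → EuclideanSpace ℝ (Fin d))
    (μ : Measure (EuclideanSpace ℝ (Fin d))) [IsProbabilityMeasure μ]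
    (hμQ : μ (convexHull ℝ (Set.range v)) = 1)
    (c : ℝ) (hc : 0 < c)
    (hball : ∀ i : Fin M, ∀ ρ : ℝ, 0 < ρ →
      ρ ≤ Metric.diam (convexHull ℝ (Set.range v)) →
      c * ρ ^ (d - 1) ≤ (μ (Metric.ball (v i) ρ)).toReal)
    {Ω : Type*} [MeasurableSpace Ω] (P : Measure Ω) [IsProbabilityMeasure P]
    (X : Fin n → Ω → EuclideanSpace ℝ (Fin d))
    (hXmeas : ∀ j, Measurable (X j))
    (hXlaw : ∀ j, P.map (X j) = μ)
    (hXindep : iIndepFun X P)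
    (r : ℝ) (hr : 0 < r)
    (hrle : r * (n : ℝ) ^ (-(1 / ((d : ℝ) - 1))) ≤
      Metric.diam (convexHull ℝ (Set.range v))) :
    (P {ω | r * (n : ℝ) ^ (-(1 / ((d : ℝ) - 1))) ≤
        Metric.hausdorffDist (convexHull ℝ (Set.range v))
          (convexHull ℝ (Set.range fun j => X j ω))}).toReal ≤
      M * Real.exp (-(c * r ^ (d - 1))) := by
  have : Nonempty (Fin M) := ⟨⟨0, hM⟩⟩
  have : Nonempty (Fin n) := ⟨⟨0, hn⟩⟩
  set Q := convexHull ℝ (Set.range v) with hQdef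
  set s := r * (n : ℝ) ^ (-(1 / ((d : ℝ) - 1))) with hsdef
  have hnR : (0:ℝ) < n := by exact_mod_cast hn
  have hD : (0:ℝ) < (d : ℝ) - 1 := by
    have : (2:ℝ) ≤ d := by exact_mod_cast hd
    linarith
  have hs : 0 < s := mul_pos hr (Real.rpow_pos_of_pos hnR _)
  have hQne : Q.Nonempty := ⟨v ⟨0, hM⟩, subset_convexHull _ _ (Set.mem_range_self _)⟩
  have hQclosed : IsClosed Q :=
    ((Set.finite_range v).isCompact_convexHull (𝕜 := ℝ)).isClosed
  -- the bad events
  set A : Fin M → Set Ω := fun i => ⋂ j, X j ⁻¹' (Metric.ball (v i) s)ᶜ with hAdef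
  set G : Set Ω := ⋂ j, X j ⁻¹' Q with hGdef
  -- Gᶜ has measure zero
  have hGc : P Gᶜ = 0 := by
    have : Gᶜ = ⋃ j, X j ⁻¹' Qᶜ := by
      simp [hGdef, Set.compl_iInter, Set.preimage_compl]
    rw [this]
    refine le_antisymm (le_trans (measure_iUnion_le _) ?_) zero_le
    have h0 : ∀ j, P ((X j ⁻¹' Q)ᶜ) = 0 := by
      intro j
      rw [← Set.preimage_compl,
        ← Measure.map_apply (hXmeas j) hQclosed.measurableSet.compl, hXlaw j,
        measure_compl hQclosed.measurableSet (measure_ne_top μ _), hμQ, measure_univ,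
        tsub_self]
    simp [h0]
  -- event inclusion
  have hincl : {ω | s ≤ Metric.hausdorffDist Q
      (convexHull ℝ (Set.range fun j => X j ω))} ⊆ (⋃ i, A i) ∪ Gᶜ := by
    intro ω hω
    by_cases hG : ω ∈ G
    · left
      set Qn := convexHull ℝ (Set.range fun j => X j ω) with hQndef
      have hXQ : ∀ j, X j ω ∈ Q := fun j => Set.mem_iInter.mp hG j
      have hQnQ : Qn ⊆ Q := convexHull_min (by
        rintro x ⟨j, rfl⟩; exact hXQ j) (convex_convexHull _ _)
      have hQnne : Qn.Nonempty :=
        ⟨X ⟨0, hn⟩ ω, subset_convexHull _ _ (Set.mem_range_self _)⟩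
      by_contra hA
      simp only [Set.mem_iUnion, not_exists, hAdef, Set.mem_iInter, Set.mem_preimage,
        Set.mem_compl_iff, Metric.mem_ball, not_forall, not_not] at hA
      -- hA : ∀ i, ∃ j, dist (X j ω) (v i) < s
      set s' : ℝ := Finset.univ.sup' Finset.univ_nonempty
        (fun i => Metric.infDist (v i) Qn) with hs'def
      have hs'lt : s' < s := by
        rw [hs'def, Finset.sup'_lt_iff]
        intro i _
        obtain ⟨j, hj⟩ := hA i
        calc Metric.infDist (v i) Qn ≤ dist (v i) (X j ω) :=
              Metric.infDist_le_dist_of_mem (subset_convexHull _ _ (Set.mem_range_self _))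
          _ < s := by rwa [dist_comm]
      have hs'nonneg : 0 ≤ s' := le_trans Metric.infDist_nonneg
        (Finset.le_sup' (f := fun i => Metric.infDist (v i) Qn)
          (Finset.mem_univ (⟨0, hM⟩ : Fin M)))
      have hH : Metric.hausdorffDist Q Qn ≤ s' := by
        refine Metric.hausdorffDist_le_of_infDist hs'nonneg ?_ ?_
        · intro x hx
          obtain ⟨y, ⟨i, rfl⟩, hle⟩ :=
            (convexOn_infDist_aux (convex_convexHull ℝ _) hQnne).exists_ge_of_mem_convexHull
              (Set.subset_univ _) hx
          exact hle.trans (Finset.le_sup' (f := fun i => Metric.infDist (v i) Qn)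
            (Finset.mem_univ i))
        · intro y hy
          rw [Metric.infDist_zero_of_mem (hQnQ hy)]
          exact hs'nonneg
      exact absurd hω (by simp only [Set.mem_setOf_eq, not_le]; exact lt_of_le_of_lt hH hs'lt)
    · right; exact hG
  -- probability of each bad event
  have hA_meas : ∀ i j, MeasurableSet (X j ⁻¹' (Metric.ball (v i) s)ᶜ) :=
    fun i j => hXmeas j measurableSet_ball.compl
  have hAi : ∀ i, P (A i) = (μ (Metric.ball (v i) s)ᶜ) ^ n := by
    intro i
    have h1 : A i = ⋂ j ∈ Finset.univ, X j ⁻¹' (Metric.ball (v i) s)ᶜ := by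
      simp [hAdef]
    rw [h1, hXindep.measure_inter_preimage_eq_mul Finset.univ
      (sets := fun _ => (Metric.ball (v i) s)ᶜ)
      (fun j _ => measurableSet_ball.compl)]
    have h2 : ∀ j : Fin n, P (X j ⁻¹' (Metric.ball (v i) s)ᶜ) =
        μ (Metric.ball (v i) s)ᶜ := by
      intro j
      rw [← Measure.map_apply (hXmeas j) measurableSet_ball.compl, hXlaw j]
    rw [Finset.prod_congr rfl (fun j _ => h2 j), Finset.prod_const, Finset.card_univ,
      Fintype.card_fin]
  -- main chain
  have hPle : P {ω | s ≤ Metric.hausdorffDist Q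
      (convexHull ℝ (Set.range fun j => X j ω))} ≤
      ∑ i : Fin M, (μ (Metric.ball (v i) s)ᶜ) ^ n := by
    calc P _ ≤ P ((⋃ i, A i) ∪ Gᶜ) := measure_mono hincl
      _ ≤ P (⋃ i, A i) + P Gᶜ := measure_union_le _ _
      _ = P (⋃ i, A i) := by rw [hGc, add_zero]
      _ ≤ ∑ i : Fin M, P (A i) := measure_iUnion_fintype_le _ _
      _ = ∑ i : Fin M, (μ (Metric.ball (v i) s)ᶜ) ^ n := by simp [hAi]
  -- to real numbers
  set x : ℝ := c * s ^ (d - 1) with hxdef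
  have ht : ∀ i : Fin M, x ≤ (μ (Metric.ball (v i) s)).toReal :=
    fun i => hball i s hs hrle
  have ht1 : ∀ i : Fin M, (μ (Metric.ball (v i) s)).toReal ≤ 1 := by
    intro i
    rw [← ENNReal.toReal_one]
    exact ENNReal.toReal_mono ENNReal.one_ne_top prob_le_one
  have hcompl : ∀ i : Fin M, ((μ (Metric.ball (v i) s)ᶜ)).toReal =
      1 - (μ (Metric.ball (v i) s)).toReal := by
    intro i
    rw [measure_compl measurableSet_ball (measure_ne_top μ _), measure_univ,
      ENNReal.toReal_sub_of_le prob_le_one ENNReal.one_ne_top, ENNReal.toReal_one]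
  -- bound each term
  have hterm : ∀ i : Fin M, ((μ (Metric.ball (v i) s)ᶜ) ^ n).toReal ≤
      Real.exp (-(c * r ^ (d - 1))) := by
    intro i
    rw [ENNReal.toReal_pow, hcompl i]
    have hx1 : x ≤ 1 := le_trans (ht i) (ht1 i)
    have hx0 : 0 < x := mul_pos hc (pow_pos hs _)
    calc (1 - (μ (Metric.ball (v i) s)).toReal) ^ n ≤ (1 - x) ^ n := by
          apply pow_le_pow_left₀ (by linarith [ht1 i, ht i]) (by linarith [ht i])
      _ ≤ Real.exp (-x) ^ n := by
          apply pow_le_pow_left₀ (by linarith) (by linarith [Real.add_one_le_exp (-x)])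
      _ = Real.exp (-(n * x)) := by
          rw [← Real.exp_nat_mul]; congr 1; ring
      _ = Real.exp (-(c * r ^ (d - 1))) := by
          congr 1
          have hd1 : ((d - 1 : ℕ) : ℝ) = (d : ℝ) - 1 := by
            have : 1 ≤ d := le_trans one_le_two hd
            push_cast [Nat.cast_sub this]
            ring
          have hpow : ((n : ℝ) ^ (-(1 / ((d : ℝ) - 1)))) ^ (d - 1 : ℕ) = (n : ℝ)⁻¹ := by
            rw [← Real.rpow_natCast ((n : ℝ) ^ (-(1 / ((d : ℝ) - 1)))) (d - 1),
              ← Real.rpow_mul hnR.le, hd1]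
            rw [show -(1 / ((d : ℝ) - 1)) * ((d : ℝ) - 1) = -1 by
              field_simp]
            rw [Real.rpow_neg_one]
          rw [hxdef, hsdef, mul_pow, hpow]
          field_simp
  -- conclude
  calc (P {ω | s ≤ Metric.hausdorffDist Q
        (convexHull ℝ (Set.range fun j => X j ω))}).toReal ≤
      (∑ i : Fin M, (μ (Metric.ball (v i) s)ᶜ) ^ n).toReal := by
        apply ENNReal.toReal_mono _ hPle
        refine ne_of_lt (lt_of_le_of_lt (Finset.sum_le_sum fun i _ =>
          pow_le_pow_left₀ zero_le prob_le_one n) ?_)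
        simp only [one_pow, Finset.sum_const, Finset.card_univ, Fintype.card_fin,
          nsmul_eq_mul, mul_one]
        exact ENNReal.natCast_lt_top _
    _ = ∑ i : Fin M, ((μ (Metric.ball (v i) s)ᶜ) ^ n).toReal := by
        rw [ENNReal.toReal_sum]
        intro i _
        exact ne_of_lt (lt_of_le_of_lt (pow_le_pow_left₀ zero_le prob_le_one n)
          (by simp [one_pow]))
    _ ≤ ∑ i : Fin M, Real.exp (-(c * r ^ (d - 1))) := Finset.sum_le_sum fun i _ => hterm i
    _ = M * Real.exp (-(c * r ^ (d - 1))) := by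
        rw [Finset.sum_const, Finset.card_univ, Fintype.card_fin, nsmul_eq_mul]
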